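/- Consider an LSS with D modes in balanced form: for each mode q there is a diagonal positive definite matrix Λ_q ∈ ℝ^{n_q×n_q}, partitioned as Λ_q = diag(Λ̂_q, β_q) with Λ̂_q ∈ ℝ^{(n_q−1)×(n_q−1)} and β_q > 0, and there is M > 0 such that A_q Λ_q + Λ_q A_qᵀ + M Λ_q + B_q B_qᵀ ≺ 0 and A_qᵀ Λ_q + Λ_q A_q + M Λ_q + C_qᵀ C_q ≺ 0 for all q. Let the one-step truncated system (Â_q, B̂_q, Ĉ_q, K̂_{q1,q2}) be obtained by keeping the leading (n_q−1)-blocks. Fix a mode q active on an interval, let x̄(t) ∈ ℝ^{n_q} solve x̄' = A_q x̄ + B_q u and x̂(t) ∈ ℝ^{n_q−1} solve x̂' = Â_q x̂ + B̂_q u on that interval, with outputs y = C_q x̄ and ŷ = Ĉ_q x̂. Write x̄ = (x̄₁; x̄₂) with x̄₂ ∈ ℝ the last component, set x_o = (x̄₁ − x̂; x̄₂), x_c = (x̄₁ + x̂; x̄₂), V(t) = x_oᵀ Λ_q x_o + β_q² x_cᵀ Λ_q^{−1} x_c, and β = max_q β_q. Then for all t in the interval, dV/dt ≤ −M V(t)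 + 4β² ‖u(t)‖₂² − ‖y(t) − ŷ(t)‖₂². -/

import Mathlib

/-!
The error `x_o = x̄ - (x̂; 0)` and the sum `x_c = x̄ + (x̂; 0)` obey `x_o' = A x_o + w e_n` and
`x_c' = A x_c + 2 B u - w e_n` for one scalar `w`: everything the truncation discards enters
through the last coordinate. The observability inequality bounds `d/dt (x_oᵀ Λ x_o)`; the
reachability inequality, evaluated at `Λ⁻¹ x_c`, together with `4 aᵀu ≤ |a|² + 4|u|²` bounds
`d/dt (x_cᵀ Λ⁻¹ x_c)`. The two `w`-terms cancel because `x_o` and `x_c` share their last coordinate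
and `β_q² Λ⁻¹ = β_q = Λ` there.
-/

open Matrix

section Derivatives

variable {ι κ : Type*} [Fintype ι] [Fintype κ] {x y : ℝ → ι → ℝ} {x' y' : ι → ℝ} {t : ℝ}

theorem HasDerivAt.dotProduct (hx : HasDerivAt x x' t) (hy : HasDerivAt y y' t) :
    HasDerivAt (fun s => x s ⬝ᵥ y s) (x' ⬝ᵥ y t + x t ⬝ᵥ y') t := by
  have hx := hasDerivAt_pi.mp hx
  have hy := hasDerivAt_pi.mp hy
  unfold _root_.dotProduct
  rw [← Finset.sum_add_distrib]
  exact HasDerivAt.fun_sum fun i _ => (hx i).mul (hy i)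

theorem HasDerivAt.mulVec (P : Matrix κ ι ℝ) (hx : HasDerivAt x x' t) :
    HasDerivAt (fun s => P *ᵥ x s) (P *ᵥ x') t :=
  (P.mulVecLin.toContinuousLinearMap.hasFDerivAt (x := x t)).comp_hasDerivAt t hx

theorem HasDerivAt.dotProduct_mulVec_self {P : Matrix ι ι ℝ} (hP : Pᵀ = P)
    (hx : HasDerivAt x x' t) :
    HasDerivAt (fun s => x s ⬝ᵥ P *ᵥ x s) (2 * (x t ⬝ᵥ P *ᵥ x')) t := by
  convert hx.dotProduct (hx.mulVec P) using 1
  rw [dotProduct_comm, dotProduct_mulVec, ← mulVec_transpose, hP]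
  ring

end Derivatives

section Lyapunov

variable {ι κ μ : Type*} [Fintype ι] [Fintype κ] [Fintype μ]
  {A P : Matrix ι ι ℝ} {M : ℝ}

theorem dotProduct_mulVec_comm_of_transpose_eq {R : Type*} [CommSemiring R] {P : Matrix ι ι R}
    (hP : Pᵀ = P) (x y : ι → R) : x ⬝ᵥ P *ᵥ y = y ⬝ᵥ P *ᵥ x := by
  conv_lhs => rw [← hP]
  exact dotProduct_transpose_mulVec P x y

theorem two_mul_dotProduct_mulVec_mulVec_le_of_lyapunov {C : Matrix κ ι ℝ} (hP : Pᵀ = P)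
    (h : (-(Aᵀ * P + P * A + M • P + Cᵀ * C)).PosSemidef) (x : ι → ℝ) :
    2 * (x ⬝ᵥ P *ᵥ (A *ᵥ x)) ≤ -M * (x ⬝ᵥ P *ᵥ x) - C *ᵥ x ⬝ᵥ C *ᵥ x := by
  have h0 := h.dotProduct_mulVec_nonneg x
  have hA : x ⬝ᵥ Aᵀ *ᵥ (P *ᵥ x) = x ⬝ᵥ P *ᵥ (A *ᵥ x) := by
    rw [dotProduct_transpose_mulVec, dotProduct_mulVec_comm_of_transpose_eq hP, dotProduct_comm]
  simp only [star_trivial, neg_mulVec, dotProduct_neg, add_mulVec, dotProduct_add,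
    smul_mulVec, dotProduct_smul, smul_eq_mul, ← mulVec_mulVec, hA,
    dotProduct_transpose_mulVec] at h0
  linarith

theorem four_mul_dotProduct_le (v u : μ → ℝ) : 4 * (v ⬝ᵥ u) ≤ v ⬝ᵥ v + 4 * (u ⬝ᵥ u) := by
  have h := dotProduct_self_star_nonneg (v - (2 : ℝ) • u)
  simp only [star_trivial, sub_dotProduct, dotProduct_sub, smul_dotProduct, dotProduct_smul,
    smul_eq_mul, dotProduct_comm u v] at h
  linarith

theorem two_mul_dotProduct_inv_mulVec_le_of_lyapunov [DecidableEq ι] {B : Matrix ι μ ℝ}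
    (hP : Pᵀ = P) (hPdet : IsUnit P.det) (h : (-(A * P + P * Aᵀ + M • P + B * Bᵀ)).PosSemidef)
    (y : ι → ℝ) (u : μ → ℝ) :
    2 * (y ⬝ᵥ P⁻¹ *ᵥ (A *ᵥ y + (2 : ℝ) • B *ᵥ u)) ≤
      -M * (y ⬝ᵥ P⁻¹ *ᵥ y) + 4 * (u ⬝ᵥ u) := by
  set z := P⁻¹ *ᵥ y
  have hy : y = P *ᵥ z := by rw [mulVec_mulVec, mul_nonsing_inv P hPdet, one_mulVec]
  have hPinv : ∀ v, y ⬝ᵥ P⁻¹ *ᵥ v = v ⬝ᵥ z :=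
    dotProduct_mulVec_comm_of_transpose_eq (by rw [transpose_nonsing_inv, hP]) y
  have hlyap := two_mul_dotProduct_mulVec_mulVec_le_of_lyapunov (A := Aᵀ) (C := Bᵀ) hP
    (by simpa only [transpose_transpose] using h) z
  have hA : A *ᵥ y ⬝ᵥ z = z ⬝ᵥ P *ᵥ (Aᵀ *ᵥ z) := by
    rw [dotProduct_mulVec_comm_of_transpose_eq hP, ← hy, mulVec_transpose, ← dotProduct_mulVec,
      dotProduct_comm]
  have hB : B *ᵥ u ⬝ᵥ z = Bᵀ *ᵥ z ⬝ᵥ u := by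
    rw [mulVec_transpose, ← dotProduct_mulVec, dotProduct_comm]
  have hyz : y ⬝ᵥ z = z ⬝ᵥ P *ᵥ z := by rw [hy, dotProduct_comm]
  have hcs := four_mul_dotProduct_le (Bᵀ *ᵥ z) u
  simp only [hPinv, add_dotProduct, smul_dotProduct, smul_eq_mul]
  rw [hA, hB, hyz]
  linarith

end Lyapunov

namespace Fin

variable {n : ℕ} {R : Type*}

theorem sub_snoc_zero [AddGroup R] (v : Fin (n + 1) → R) (w : Fin n → R) :
    v - snoc w 0 = snoc (fun i => v i.castSucc - w i) (v (last n)) := by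
  ext i
  induction i using lastCases <;> simp

theorem add_snoc_zero [AddGroup R] (v : Fin (n + 1) → R) (w : Fin n → R) :
    v + snoc w 0 = snoc (fun i => v i.castSucc + w i) (v (last n)) := by
  ext i
  induction i using lastCases <;> simp

theorem snoc_init_zero [AddGroup R] (v : Fin (n + 1) → R) :
    snoc (init v) 0 = v - Pi.single (last n) (v (last n)) := by
  ext i
  induction i using lastCases <;> simp [init]

theorem _root_.HasDerivAt.fin_snoc_zero {x : ℝ → Fin n → ℝ} {x' : Fin n → ℝ} {t : ℝ}
    (hx : HasDerivAt x x' t) :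
    HasDerivAt (fun s => snoc (x s) 0) (snoc x' 0 : Fin (n + 1) → ℝ) t := by
  refine hasDerivAt_pi.mpr fun i => ?_
  induction i using lastCases with
  | last => simpa using hasDerivAt_const t (0 : ℝ)
  | cast j => simpa using hasDerivAt_pi.mp hx j

end Fin

theorem Matrix.mulVec_snoc_zero {n : ℕ} {κ R : Type*} [NonUnitalNonAssocSemiring R]
    (C : Matrix κ (Fin (n + 1)) R) (v : Fin n → R) :
    C *ᵥ Fin.snoc v 0 = C.submatrix id Fin.castSucc *ᵥ v := by
  ext i
  simp [mulVec, dotProduct, Fin.sum_univ_castSucc]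

theorem exists_hasDerivAt_truncation_errors {n : ℕ} {μ : Type*} [Fintype μ]
    (A : Matrix (Fin (n + 1)) (Fin (n + 1)) ℝ) (B : Matrix (Fin (n + 1)) μ ℝ)
    {xbar : ℝ → Fin (n + 1) → ℝ} {xhat : ℝ → Fin n → ℝ} {u : μ → ℝ} {t : ℝ}
    (hxbar : HasDerivAt xbar (A *ᵥ xbar t + B *ᵥ u) t)
    (hxhat : HasDerivAt xhat (A.submatrix Fin.castSucc Fin.castSucc *ᵥ xhat t +
      B.submatrix Fin.castSucc id *ᵥ u) t) :
    ∃ w : ℝ,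
      HasDerivAt (fun s => xbar s - Fin.snoc (xhat s) 0)
        (A *ᵥ (xbar t - Fin.snoc (xhat t) 0) + Pi.single (Fin.last n) w) t ∧
      HasDerivAt (fun s => xbar s + Fin.snoc (xhat s) 0)
        (A *ᵥ (xbar t + Fin.snoc (xhat t) 0) + (2 : ℝ) • B *ᵥ u - Pi.single (Fin.last n) w) t := by
  set v := A *ᵥ Fin.snoc (xhat t) 0 + B *ᵥ u
  have hpad : HasDerivAt (fun s => Fin.snoc (xhat s) 0)
      (v - Pi.single (Fin.last n) (v (Fin.last n))) t := by
    rw [← Fin.snoc_init_zero]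
    convert hxhat.fin_snoc_zero using 2
    simp only [v, mulVec_snoc_zero]
    rfl
  refine ⟨v (Fin.last n), (hxbar.sub hpad).congr_deriv ?_, (hxbar.add hpad).congr_deriv ?_⟩
  all_goals simp only [v, mulVec_sub, mulVec_add]; module

theorem Matrix.inv_diagonal_of_ne_zero {ι K : Type*} [Fintype ι] [DecidableEq ι] [Field K]
    {d : ι → K} (hd : ∀ i, d i ≠ 0) : (diagonal d)⁻¹ = diagonal d⁻¹ :=
  inv_eq_left_inv <| by
    rw [diagonal_mul_diagonal, ← diagonal_one]
    exact congrArg diagonal (funext fun i => inv_mul_cancel₀ (hd i))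

theorem truncation_error_dissipation {n : ℕ} {κ μ : Type*} [Fintype κ] [Fintype μ]
    {A : Matrix (Fin (n + 1)) (Fin (n + 1)) ℝ} {B : Matrix (Fin (n + 1)) μ ℝ}
    {C : Matrix κ (Fin (n + 1)) ℝ} {d : Fin (n + 1) → ℝ} (hd : ∀ i, 0 < d i) {M : ℝ}
    (hR : (-(A * diagonal d + diagonal d * Aᵀ + M • diagonal d + B * Bᵀ)).PosSemidef)
    (hO : (-(Aᵀ * diagonal d + diagonal d * A + M • diagonal d + Cᵀ * C)).PosSemidef)
    {xo xc : Fin (n + 1) → ℝ} (hlast : xo (Fin.last n) = xc (Fin.last n)) (u : μ → ℝ) (w : ℝ) :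
    2 * (xo ⬝ᵥ diagonal d *ᵥ (A *ᵥ xo + Pi.single (Fin.last n) w)) +
        d (Fin.last n) ^ 2 * (2 * (xc ⬝ᵥ (diagonal d)⁻¹ *ᵥ
          (A *ᵥ xc + (2 : ℝ) • B *ᵥ u - Pi.single (Fin.last n) w))) ≤
      -M * (xo ⬝ᵥ diagonal d *ᵥ xo + d (Fin.last n) ^ 2 * (xc ⬝ᵥ (diagonal d)⁻¹ *ᵥ xc)) +
        4 * d (Fin.last n) ^ 2 * (u ⬝ᵥ u) - C *ᵥ xo ⬝ᵥ C *ᵥ xo := by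
  have hsymm := diagonal_transpose d
  have hdet : IsUnit (diagonal d).det :=
    det_diagonal (d := d) ▸ (Finset.prod_pos fun i _ => hd i).ne'.isUnit
  have hinv := inv_diagonal_of_ne_zero fun i => (hd i).ne'
  have hobs := two_mul_dotProduct_mulVec_mulVec_le_of_lyapunov hsymm hO xo
  have hreach := mul_le_mul_of_nonneg_left
    (two_mul_dotProduct_inv_mulVec_le_of_lyapunov hsymm hdet hR xc u) (sq_nonneg (d (Fin.last n)))
  have hcross : xo ⬝ᵥ diagonal d *ᵥ Pi.single (Fin.last n) w =
      d (Fin.last n) ^ 2 * (xc ⬝ᵥ (diagonal d)⁻¹ *ᵥ Pi.single (Fin.last n) w) := by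
    rw [hinv, diagonal_mulVec_single, diagonal_mulVec_single, dotProduct_single,
      dotProduct_single, hlast, Pi.inv_apply]
    field_simp [(hd (Fin.last n)).ne']
  rw [mulVec_sub, dotProduct_sub, mulVec_add (diagonal d), dotProduct_add]
  linarith

-- Mode `q` has dimension `n q + 1`, `Λ_q = diagonal (d q)` and `β_q = d q (Fin.last (n q))`.
theorem stmt_7 {D m p : ℕ} (n : Fin D → ℕ)
    (A : (q : Fin D) → Matrix (Fin (n q + 1)) (Fin (n q + 1)) ℝ)
    (B : (q : Fin D) → Matrix (Fin (n q + 1)) (Fin m) ℝ)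
    (C : (q : Fin D) → Matrix (Fin p) (Fin (n q + 1)) ℝ)
    (d : (q : Fin D) → Fin (n q + 1) → ℝ) (hd : ∀ q i, 0 < d q i)
    (M : ℝ)
    (hLyapR : ∀ q, (-(A q * Matrix.diagonal (d q) + Matrix.diagonal (d q) * (A q)ᵀ +
        M • Matrix.diagonal (d q) + B q * (B q)ᵀ)).PosDef)
    (hLyapO : ∀ q, (-((A q)ᵀ * Matrix.diagonal (d q) + Matrix.diagonal (d q) * A q +
        M • Matrix.diagonal (d q) + (C q)ᵀ * C q)).PosDef)
    (β : ℝ) (hβ : IsGreatest (Set.range fun q => d q (Fin.last (n q))) β)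
    (q : Fin D) (a b : ℝ) (u : ℝ → Fin m → ℝ)
    (xbar : ℝ → Fin (n q + 1) → ℝ) (xhat : ℝ → Fin (n q) → ℝ)
    (hxbar : ∀ t ∈ Set.Ioo a b,
      HasDerivAt xbar ((A q).mulVec (xbar t) + (B q).mulVec (u t)) t)
    (hxhat : ∀ t ∈ Set.Ioo a b,
      HasDerivAt xhat
        (((A q).submatrix Fin.castSucc Fin.castSucc).mulVec (xhat t) +
          ((B q).submatrix Fin.castSucc id).mulVec (u t)) t) :
    let xo : ℝ → Fin (n q + 1) → ℝ := fun s =>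
      Fin.snoc (fun i : Fin (n q) => xbar s i.castSucc - xhat s i) (xbar s (Fin.last (n q)))
    let xc : ℝ → Fin (n q + 1) → ℝ := fun s =>
      Fin.snoc (fun i : Fin (n q) => xbar s i.castSucc + xhat s i) (xbar s (Fin.last (n q)))
    let V : ℝ → ℝ := fun s =>
      xo s ⬝ᵥ (Matrix.diagonal (d q)).mulVec (xo s) +
        (d q (Fin.last (n q))) ^ 2 * (xc s ⬝ᵥ ((Matrix.diagonal (d q))⁻¹).mulVec (xc s))
    ∀ t ∈ Set.Ioo a b,
      deriv V t ≤ -M * V t + 4 * β ^ 2 * (∑ j, (u t j) ^ 2) -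
        ∑ j, ((C q).mulVec (xbar t) j - ((C q).submatrix id Fin.castSucc).mulVec (xhat t) j) ^ 2 := by
  intro xo xc V t ht
  have hxo : ∀ s, xbar s - Fin.snoc (xhat s) 0 = xo s := fun s => Fin.sub_snoc_zero _ _
  have hxc : ∀ s, xbar s + Fin.snoc (xhat s) 0 = xc s := fun s => Fin.add_snoc_zero _ _
  obtain ⟨w, hdo, hdc⟩ := exists_hasDerivAt_truncation_errors (A q) (B q) (hxbar t ht) (hxhat t ht)
  simp only [hxo, hxc] at hdo hdc
  have hV : HasDerivAt V _ t := (hdo.dotProduct_mulVec_self (diagonal_transpose _)).add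
    ((hdc.dotProduct_mulVec_self (by rw [transpose_nonsing_inv, diagonal_transpose])).const_mul _)
  have hdiss : deriv V t ≤ -M * V t + 4 * d q (Fin.last (n q)) ^ 2 * (u t ⬝ᵥ u t) -
      C q *ᵥ xo t ⬝ᵥ C q *ᵥ xo t := by
    rw [hV.deriv]
    exact truncation_error_dissipation (hd q) (hLyapR q).posSemidef (hLyapO q).posSemidef
      (xo := xo t) (xc := xc t) (by simp only [xo, xc, Fin.snoc_last]) (u t) w
  have hβq : d q (Fin.last (n q)) ^ 2 * (u t ⬝ᵥ u t) ≤ β ^ 2 * (u t ⬝ᵥ u t) :=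
    mul_le_mul_of_nonneg_right (pow_le_pow_left₀ (hd q _).le (hβ.2 ⟨q, rfl⟩) 2)
      (dotProduct_self_star_nonneg (u t))
  have hu : ∑ j, u t j ^ 2 = u t ⬝ᵥ u t := by simp only [dotProduct, sq]
  have hy : ∑ j, ((C q *ᵥ xbar t) j - ((C q).submatrix id Fin.castSucc *ᵥ xhat t) j) ^ 2 =
      C q *ᵥ xo t ⬝ᵥ C q *ᵥ xo t := by
    simp only [← hxo, mulVec_sub, mulVec_snoc_zero, dotProduct, sq, Pi.sub_apply]
  rw [hu, hy]
  linarith
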